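/- The varietal hypercube VQ_n is vertex-transitive for every n ≥ 1. -/
import Mathlib


def VQRel : (n : ℕ) → (Fin n → ZMod 2) → (Fin n → ZMod 2) → Prop
  | 0, _, _ => False
  | n + 1, x, y =>
    if x (Fin.last n) = y (Fin.last n) then
      VQRel n (Fin.init x) (Fin.init y)
    else if (n + 1) % 3 = 0 then
      (∀ i : Fin n, (i : ℕ) < n - 2 → x i.castSucc = y i.castSucc) ∧
        y ⟨n - 1, by omega⟩ = x ⟨n - 1, by omega⟩ ∧
        y ⟨n - 2, by omega⟩ = x ⟨n - 2, by omega⟩ + x ⟨n - 1, by omega⟩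
    else
      ∀ i : Fin n, x i.castSucc = y i.castSucc

/-- The varietal hypercube `VQ_n`. -/
def varietalCube (n : ℕ) : SimpleGraph (Fin n → ZMod 2) :=
  SimpleGraph.fromRel (VQRel n)

/-- The shear/translation map. -/
def phi (n : ℕ) (t : ℕ → ZMod 2) (x : Fin n → ZMod 2) : Fin n → ZMod 2 :=
  fun i => x i + t (i : ℕ) +
    if h : (i : ℕ) % 3 = 0 ∧ (i : ℕ) + 3 ≤ n then t ((i : ℕ) + 1) * x ⟨(i : ℕ) + 2, by omega⟩
    else 0

lemma phi_last (n : ℕ) (t : ℕ → ZMod 2) (x : Fin (n+1) → ZMod 2) :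
    phi (n+1) t x (Fin.last n) = x (Fin.last n) + t n := by
  simp only [phi, Fin.val_last]
  rw [dif_neg (by omega), add_zero]

lemma init_phi (n : ℕ) (t : ℕ → ZMod 2) (x : Fin (n+1) → ZMod 2) :
    Fin.init (phi (n+1) t x) =
      phi n (fun i => t i + if i = n - 2 ∧ (n + 1) % 3 = 0 then t (n-1) * x (Fin.last n) else 0)
        (Fin.init x) := by
  funext j
  have hj := j.isLt
  simp only [Fin.init, phi, Fin.coe_castSucc]
  by_cases hc1 : (j : ℕ) % 3 = 0 ∧ (j : ℕ) + 3 ≤ n + 1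
  · by_cases hc : (j : ℕ) % 3 = 0 ∧ (j : ℕ) + 3 ≤ n
    · rw [dif_pos hc1, dif_pos hc, if_neg (by omega), if_neg (by omega)]
      have e2 : Fin.castSucc (⟨(j:ℕ)+2, by omega⟩ : Fin n) = (⟨(j:ℕ)+2, by omega⟩ : Fin (n+1)) := by
        ext; simp
      rw [e2]
      ring
    · -- boundary: j = n-2, 3 ∣ n+1
      rw [dif_pos hc1, dif_neg hc, if_pos (by omega)]
      have e1 : (j:ℕ) + 1 = n - 1 := by omega
      have e2 : (⟨(j:ℕ)+2, by omega⟩ : Fin (n+1)) = Fin.last n := by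
        ext; simp [Fin.last]; omega
      rw [e1, e2]
      ring
  · rw [dif_neg hc1, dif_neg (by omega), if_neg (by omega)]
    ring

lemma phi_rel : ∀ (n : ℕ) (t : ℕ → ZMod 2) (x y : Fin n → ZMod 2),
    VQRel n x y → VQRel n (phi n t x) (phi n t y) := by
  intro n
  induction n with
  | zero => intro t x y h; exact h.elim
  | succ n ih =>
    intro t x y h
    simp only [VQRel] at h ⊢
    by_cases htop : x (Fin.last n) = y (Fin.last n)
    · rw [if_pos htop] at h
      rw [if_pos (by rw [phi_last, phi_last, htop])]
      rw [init_phi, init_phi, htop]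
      exact ih _ _ _ h
    · rw [if_neg htop] at h
      rw [if_neg (by rw [phi_last, phi_last]; exact fun hc => htop (by
        have := hc; exact add_right_cancel this))]
      by_cases h3 : (n + 1) % 3 = 0
      · rw [if_pos h3] at h ⊢
        obtain ⟨hlow, ha, hb⟩ := h
        have hy : y (Fin.last n) = x (Fin.last n) + 1 := by
          revert htop
          generalize x (Fin.last n) = a
          generalize y (Fin.last n) = b
          revert a b; decide
        refine ⟨?_, ?_, ?_⟩
        · intro i hi
          simp only [phi, Fin.coe_castSucc]
          rw [hlow i hi]
          by_cases hc : (i : ℕ) % 3 = 0 ∧ (i : ℕ) + 3 ≤ n + 1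
          · rw [dif_pos hc, dif_pos hc]
            have hlt : (i : ℕ) + 2 < n - 2 := by
              have := i.isLt; omega
            have := hlow ⟨(i:ℕ)+2, by omega⟩ (by simpa using hlt)
            simp only [Fin.castSucc_mk] at this
            rw [this]
          · rw [dif_neg hc, dif_neg hc]
        · simp only [phi]
          rw [dif_neg (by simp; omega), dif_neg (by simp; omega)]
          simp only [add_zero]
          rw [ha]
        · simp only [phi]
          have h2n : 2 ≤ n := by omega
          rw [dif_pos (by simp; omega), dif_pos (by simp; omega),
              dif_neg (by simp; omega)]
          simp only [add_zero]
          have e4 : (⟨n - 2 + 2, by omega⟩ : Fin (n+1)) = Fin.last n := by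
            ext; simp [Fin.last]; omega
          rw [e4]
          rw [show n - 2 + 1 = n - 1 from by omega]
          rw [hb, hy]
          ring_nf
      · rw [if_neg h3] at h ⊢
        intro i
        simp only [phi, Fin.coe_castSucc]
        rw [h i]
        by_cases hc : (i : ℕ) % 3 = 0 ∧ (i : ℕ) + 3 ≤ n + 1
        · rw [dif_pos hc, dif_pos hc]
          have hlt : (i : ℕ) + 2 < n := by
            have := i.isLt; omega
          have := h ⟨(i:ℕ)+2, hlt⟩
          simp only [Fin.castSucc_mk] at this
          rw [this]
        · rw [dif_neg hc, dif_neg hc]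

/-- inverse parameter -/
def invt (n : ℕ) (t : ℕ → ZMod 2) : ℕ → ZMod 2 :=
  fun i => t i + if i % 3 = 0 ∧ i + 3 ≤ n then t (i+1) * t (i+2) else 0

lemma phi_invt_phi (n : ℕ) (t : ℕ → ZMod 2) (x : Fin n → ZMod 2) :
    phi n (invt n t) (phi n t x) = x := by
  funext i
  have hi := i.isLt
  simp only [phi, invt]
  by_cases hc : (i : ℕ) % 3 = 0 ∧ (i : ℕ) + 3 ≤ n
  · rw [dif_pos hc, dif_pos hc, if_pos hc, if_neg (by omega),
      dif_neg (by simp; omega)]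
    ring_nf
    reduce_mod_char
  · rw [dif_neg hc, dif_neg hc, if_neg hc]
    ring_nf
    reduce_mod_char

lemma phi_phi_invt (n : ℕ) (t : ℕ → ZMod 2) (x : Fin n → ZMod 2) :
    phi n t (phi n (invt n t) x) = x := by
  funext i
  have hi := i.isLt
  simp only [phi, invt]
  by_cases hc : (i : ℕ) % 3 = 0 ∧ (i : ℕ) + 3 ≤ n
  · rw [dif_pos hc, dif_pos hc, if_pos hc, if_neg (by omega),
      dif_neg (by simp; omega), if_neg (by omega)]
    ring_nf
    reduce_mod_char
  · rw [dif_neg hc, dif_neg hc, if_neg hc]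
    ring_nf
    reduce_mod_char

def phiEquiv (n : ℕ) (t : ℕ → ZMod 2) : (Fin n → ZMod 2) ≃ (Fin n → ZMod 2) where
  toFun := phi n t
  invFun := phi n (invt n t)
  left_inv x := phi_invt_phi n t x
  right_inv x := phi_phi_invt n t x

lemma phi_adj (n : ℕ) (t : ℕ → ZMod 2) {x y : Fin n → ZMod 2}
    (h : (varietalCube n).Adj x y) : (varietalCube n).Adj (phi n t x) (phi n t y) := by
  simp only [varietalCube, SimpleGraph.fromRel_adj] at h ⊢
  refine ⟨fun he => h.1 ?_, h.2.elim (fun hr => Or.inl (phi_rel n t _ _ hr))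
    (fun hr => Or.inr (phi_rel n t _ _ hr))⟩
  have := congrArg (phi n (invt n t)) he
  rwa [phi_invt_phi, phi_invt_phi] at this

def phiIso (n : ℕ) (t : ℕ → ZMod 2) : varietalCube n ≃g varietalCube n where
  toEquiv := phiEquiv n t
  map_rel_iff' := by
    intro x y
    constructor
    · intro h
      have h2 := phi_adj n (invt n t) h
      rwa [show phi n (invt n t) (phiEquiv n t x) = x from phi_invt_phi n t x,
           show phi n (invt n t) (phiEquiv n t y) = y from phi_invt_phi n t y] at h2
    · exact phi_adj n t

def extf (n : ℕ) (x : Fin n → ZMod 2) : ℕ → ZMod 2 :=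
  fun i => if h : i < n then x ⟨i, h⟩ else 0

def tAux (n : ℕ) (U V : ℕ → ZMod 2) : ℕ → ZMod 2
  | 0 => V (n-1) + U (n-1)
  | k+1 => V (n-2-k) + U (n-2-k) +
      if (n-2-k) % 3 = 0 ∧ (n-2-k) + 3 ≤ n then tAux n U V k * U (n-2-k+2) else 0

def tfun (n : ℕ) (u v : Fin n → ZMod 2) : ℕ → ZMod 2 :=
  fun i => tAux n (extf n u) (extf n v) (n - 1 - i)

lemma phi_tfun (n : ℕ) (u v : Fin n → ZMod 2) : phi n (tfun n u v) u = v := by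
  funext i
  have hi := i.isLt
  simp only [phi, tfun]
  have hu : extf n u (i : ℕ) = u i := by
    simp only [extf]; rw [dif_pos hi]
  have hv : extf n v (i : ℕ) = v i := by
    simp only [extf]; rw [dif_pos hi]
  by_cases hie : (i : ℕ) = n - 1
  · rw [dif_neg (by omega)]
    rw [show n - 1 - (i : ℕ) = 0 from by omega]
    simp only [tAux]
    rw [show n - 1 = (i : ℕ) from by omega, hu, hv]
    ring_nf
    reduce_mod_char
  · rw [show n - 1 - (i : ℕ) = (n - 2 - (i : ℕ)) + 1 from by omega]
    simp only [tAux]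
    rw [show n - 2 - (n - 2 - (i : ℕ)) = (i : ℕ) from by omega, hu, hv]
    by_cases hc : (i : ℕ) % 3 = 0 ∧ (i : ℕ) + 3 ≤ n
    · rw [dif_pos hc, if_pos hc]
      rw [show n - 1 - ((i : ℕ) + 1) = n - 2 - (i : ℕ) from by omega]
      have hu2 : extf n u ((i : ℕ) + 2) = u ⟨(i:ℕ)+2, by omega⟩ := by
        simp only [extf]; rw [dif_pos (by omega)]
      rw [hu2]
      ring_nf
      reduce_mod_char
    · rw [dif_neg hc, if_neg hc]
      ring_nf
      reduce_mod_char

theorem varietalCube_vertexTransitive (n : ℕ) (hn : 1 ≤ n) (u v : Fin n → ZMod 2) :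
    ∃ φ : varietalCube n ≃g varietalCube n, φ u = v :=
  ⟨phiIso n (tfun n u v), phi_tfun n u v⟩
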